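/- Let P(k) = (P_1(k),...,P_n(k)) be strictly positive reals evolving as P_i(k+1) = u_i(k) · ∏_{ĵ} P_ĵ(k)^{a_{iĵ}(k)}, where A(k) = [a_{iĵ}(k)] is doubly stochastic, u_i(k) > 0, and u_i(k) = 1 for all k outside a finite set D. If the products A(k)···A(k0) converge to (1/n)·11^T, then for every i, lim_{k→∞} P_i(k) = (∏_j P_j(0))^{1/n} · ∏_{d∈D} (∏_j u_j(d))^{1/n}; that is, each P_i converges to the geometric mean of the initial values times the product over d∈D of the geometric means of the update vectors u(d). -/

import Mathlib

/-!
Taking logarithms turns the multiplicative protocol into the linear time-varying system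
`L(k+1) = A(k) L(k) + log u(k)`, whose solution is
`L(k+1) = Φ(k,0) L(0) + ∑_{d ≤ k} Φ(k,d+1) log u(d)`. Since `log u(d) = 0` off the finite set `D`,
only finitely many terms survive, and each `Φ(k,·)` tends to the averaging matrix `(1/n) 11ᵀ`.
So `L(k)` tends to the average of `L(0)` plus the averages of `log u(d)`, `d ∈ D`, and
exponentiating gives the product of geometric means.
-/

def IsDoublyStochastic {n : ℕ} (M : Matrix (Fin n) (Fin n) ℝ) : Prop :=
  (∀ i j, 0 ≤ M i j) ∧ (∀ i, ∑ j, M i j = 1) ∧ (∀ j, ∑ i, M i j = 1)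

/-- `Phi A j k = A k * A (k-1) * ··· * A j` (empty product is the identity). -/
def Phi {n : ℕ} (A : ℕ → Matrix (Fin n) (Fin n) ℝ) (j k : ℕ) : Matrix (Fin n) (Fin n) ℝ :=
  ((List.range (k + 1 - j)).map (fun t => A (k - t))).prod

open Matrix Filter Topology Finset

section LinearSystem

variable {n : ℕ} (A : ℕ → Matrix (Fin n) (Fin n) ℝ)

lemma Phi_succ {j k : ℕ} (h : j ≤ k + 1) : Phi A j (k + 1) = A (k + 1) * Phi A j k := by
  rw [Phi, Phi, show k + 1 + 1 - j = k + 1 - j + 1 by omega, List.range_succ_eq_map]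
  simp only [List.map_cons, List.prod_cons, List.map_map, Function.comp_def, Nat.sub_zero,
    Nat.succ_sub_succ]

lemma Phi_succ_self (k : ℕ) : Phi A (k + 1) k = 1 := by
  simp [Phi]

lemma Phi_self (k : ℕ) : Phi A k k = A k := by
  simp [Phi, List.range_succ]

variable {A}

lemma linear_recurrence_eq_Phi {x v : ℕ → Fin n → ℝ} (hx : ∀ k, x (k + 1) = A k *ᵥ x k + v k)
    (k : ℕ) :
    x (k + 1) = Phi A 0 k *ᵥ x 0 + ∑ d ∈ range (k + 1), Phi A (d + 1) k *ᵥ v d := by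
  induction k with
  | zero => simp [hx 0, Phi_self, Phi_succ_self]
  | succ k ih =>
    have hPhi : ∀ d ∈ range (k + 1),
        Phi A (d + 1) (k + 1) *ᵥ v d = A (k + 1) *ᵥ (Phi A (d + 1) k *ᵥ v d) := fun d hd ↦ by
      rw [Phi_succ A (by simpa using mem_range.mp hd), mulVec_mulVec]
    rw [hx, ih, mulVec_add, mulVec_sum, sum_range_succ _ (k + 1), Phi_succ_self, one_mulVec,
      Phi_succ A (Nat.zero_le _), ← mulVec_mulVec, sum_congr rfl hPhi, add_assoc]

lemma tendsto_linear_recurrence_of_tendsto_Phi {x v : ℕ → Fin n → ℝ}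
    {M : Matrix (Fin n) (Fin n) ℝ} {D : Finset ℕ}
    (hx : ∀ k, x (k + 1) = A k *ᵥ x k + v k) (hv : ∀ k ∉ D, v k = 0)
    (hPhi : ∀ k₀, Tendsto (Phi A k₀) atTop (𝓝 M)) :
    Tendsto x atTop (𝓝 (M *ᵥ x 0 + ∑ d ∈ D, M *ᵥ v d)) := by
  have hmulVec : ∀ k₀ w, Tendsto (fun k ↦ Phi A k₀ k *ᵥ w) atTop (𝓝 (M *ᵥ w)) := fun k₀ w ↦
    ((continuous_id.matrix_mulVec continuous_const).tendsto M).comp (hPhi k₀)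
  have hfinite : ∀ᶠ k in atTop,
      Phi A 0 k *ᵥ x 0 + ∑ d ∈ D, Phi A (d + 1) k *ᵥ v d = x (k + 1) := by
    filter_upwards [eventually_ge_atTop (D.sup id)] with k hk
    rw [linear_recurrence_eq_Phi hx, sum_subset (fun d hd ↦ mem_range.mpr
      (Nat.lt_succ_of_le ((le_sup (f := id) hd).trans hk)))]
    intro d _ hd
    rw [hv d hd, mulVec_zero]
  rw [← tendsto_add_atTop_iff_nat 1]
  exact ((hmulVec 0 _).add (tendsto_finsetSum D fun d _ ↦ hmulVec (d + 1) _)).congr' hfinite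

end LinearSystem

lemma averaging_mulVec {n : ℕ} (w : Fin n → ℝ) (i : Fin n) :
    (((n : ℝ)⁻¹ • Matrix.of fun _ _ ↦ (1 : ℝ)) *ᵥ w) i = (n : ℝ)⁻¹ * ∑ j, w j := by
  simp [mulVec, dotProduct, mul_sum]

lemma Real.exp_mul_sum_log {ι : Type*} [Fintype ι] {x : ι → ℝ} (hx : ∀ j, 0 < x j) (r : ℝ) :
    Real.exp (r * ∑ j, Real.log (x j)) = (∏ j, x j) ^ r := by
  rw [← Real.log_prod fun j _ ↦ (hx j).ne', Real.rpow_def_of_pos (prod_pos fun j _ ↦ hx j),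
    mul_comm]

lemma Real.log_mul_prod_rpow {ι : Type*} [Fintype ι] {c : ℝ} (hc : 0 < c) {p : ι → ℝ}
    (hp : ∀ j, 0 < p j) (a : ι → ℝ) :
    Real.log (c * ∏ j, p j ^ a j) = ∑ j, a j * Real.log (p j) + Real.log c := by
  rw [Real.log_mul hc.ne' (prod_pos fun j _ ↦ Real.rpow_pos_of_pos (hp j) _).ne',
    Real.log_prod fun j _ ↦ (Real.rpow_pos_of_pos (hp j) _).ne', add_comm]
  simp only [Real.log_rpow (hp _)]

theorem multiplicative_consensus_limit_general {n : ℕ}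
    (A : ℕ → Matrix (Fin n) (Fin n) ℝ)
    (P u : ℕ → Fin n → ℝ) (hP0 : ∀ i, 0 < P 0 i) (hupos : ∀ k i, 0 < u k i)
    (D : Finset ℕ) (huD : ∀ k, k ∉ D → ∀ i, u k i = 1)
    (hdyn : ∀ k i, P (k+1) i = u k i * ∏ j, (P k j) ^ (A k i j))
    (hconv : ∀ k0, Filter.Tendsto (fun k => Phi A k0 k) Filter.atTop
      (nhds ((n : ℝ)⁻¹ • Matrix.of (fun _ _ => (1:ℝ))))) :
    ∀ i, Filter.Tendsto (fun k => P k i) Filter.atTop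
      (nhds ((∏ j, P 0 j) ^ ((n : ℝ)⁻¹) * ∏ d ∈ D, (∏ j, u d j) ^ ((n : ℝ)⁻¹))) := by
  have hpos : ∀ k i, 0 < P k i := by
    intro k
    induction k with
    | zero => exact hP0
    | succ k ih =>
      intro i
      rw [hdyn]
      exact mul_pos (hupos k i) (prod_pos fun j _ ↦ Real.rpow_pos_of_pos (ih j) _)
  have hlog_tendsto := tendsto_linear_recurrence_of_tendsto_Phi
    (x := fun k i ↦ Real.log (P k i)) (v := fun k i ↦ Real.log (u k i)) (D := D)
    (fun k ↦ funext fun i ↦ by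
      simp only [hdyn, Real.log_mul_prod_rpow (hupos k i) (hpos k), Pi.add_apply, mulVec,
        dotProduct])
    (fun k hk ↦ funext fun i ↦ by simp [huD k hk i]) hconv
  intro i
  have hexp := (Real.continuous_exp.tendsto _).comp
    (((continuous_apply i).tendsto _).comp hlog_tendsto)
  simp only [Function.comp_def, Pi.add_apply, Finset.sum_apply, averaging_mulVec, Real.exp_add,
    Real.exp_sum, Real.exp_log (hpos _ i)] at hexp
  simpa only [Real.exp_mul_sum_log hP0, Real.exp_mul_sum_log (hupos _)] using hexp

/-- Theorem 1 of the paper: under the multiplicative consensus protocol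
`P_i(k+1) = u_i(k) · ∏_ĵ P_ĵ(k)^{a_{iĵ}(k)}` with doubly stochastic `A(k)`, update
values equal to 1 outside a finite set `D`, and products converging to the averaging
matrix, each `P_i(k)` converges to the geometric mean of the initial values times
the product over `d ∈ D` of the geometric means of the update vectors. -/
theorem multiplicative_consensus_limit {n : ℕ} (hn : 0 < n)
    (A : ℕ → Matrix (Fin n) (Fin n) ℝ) (hA : ∀ k, IsDoublyStochastic (A k))
    (P u : ℕ → Fin n → ℝ) (hP0 : ∀ i, 0 < P 0 i) (hupos : ∀ k i, 0 < u k i)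
    (D : Finset ℕ) (huD : ∀ k, k ∉ D → ∀ i, u k i = 1)
    (hdyn : ∀ k i, P (k+1) i = u k i * ∏ j, (P k j) ^ (A k i j))
    (hconv : ∀ k0, Filter.Tendsto (fun k => Phi A k0 k) Filter.atTop
      (nhds ((n : ℝ)⁻¹ • Matrix.of (fun _ _ => (1:ℝ))))) :
    ∀ i, Filter.Tendsto (fun k => P k i) Filter.atTop
      (nhds ((∏ j, P 0 j) ^ ((n : ℝ)⁻¹) * ∏ d ∈ D, (∏ j, u d j) ^ ((n : ℝ)⁻¹))) :=
  multiplicative_consensus_limit_general A P u hP0 hupos D huD hdyn hconv
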